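/- arXiv:math-ph/9907011 — 2 statements merged into one kernel-verified Lean document; each statement's English description precedes it below -/
import Mathlib

section
/- The binary Rudin–Shapiro sequence x contains no palindromic factor of length 9, none of length 11, and none of length 13. -/
/-- `rsCount n` is the number of (possibly overlapping) `11`-blocks in the binary
expansion of `n`, i.e. the number of indices `k` such that bits `k` and `k+1` of `n`
are both `1`.  (Bits `k ≥ n` of `n` all vanish, so `Finset.range n` suffices.) -/
def rsCount (n : ℕ) : ℕ :=
  ((Finset.range n).filter (fun k => n.testBit k ∧ n.testBit (k + 1))).card

open Fin.NatCast in
/-- The binary Rudin–Shapiro sequence, `x n = rsCount n (mod 2)`. -/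
def rsB (n : ℕ) : Fin 2 := (rsCount n : Fin 2)

/-- The sequence `x` contains a palindromic factor of length `ℓ`. -/
def HasPalFactor {A : Type*} (x : ℕ → A) (ℓ : ℕ) : Prop :=
  ∃ i : ℕ, ∀ j < ℓ, x (i + j) = x (i + ℓ - 1 - j)

/-- The sequence `x` is palindromic: it contains palindromic factors of
arbitrarily large length. -/
def Palindromic {A : Type*} (x : ℕ → A) : Prop :=
  ∀ N : ℕ, ∃ ℓ : ℕ, N ≤ ℓ ∧ HasPalFactor x ℓ

set_option maxRecDepth 100000

open Fin.NatCast

-- auxiliary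

lemma testBit_ge {n k : ℕ} (h : n ≤ k) : n.testBit k = false :=
  Nat.testBit_lt_two_pow (lt_of_lt_of_le (Nat.lt_two_pow_self (n := n)) (Nat.pow_le_pow_right (by norm_num) h))

lemma rsCount_eq_cnt (n m : ℕ) (h : n ≤ m) :
    rsCount n = ((Finset.range m).filter (fun k => n.testBit k ∧ n.testBit (k + 1))).card := by
  unfold rsCount
  congr 1
  ext k
  simp only [Finset.mem_filter, Finset.mem_range]
  constructor
  · rintro ⟨hk, h1, h2⟩
    exact ⟨by omega, h1, h2⟩
  · rintro ⟨hk, h1, h2⟩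
    refine ⟨?_, h1, h2⟩
    by_contra hc
    rw [testBit_ge (by omega)] at h1
    simp at h1

lemma rsCount_rec (n : ℕ) :
    rsCount n = rsCount (n / 2) + (if n % 2 = 1 ∧ (n / 2) % 2 = 1 then 1 else 0) := by
  rw [rsCount_eq_cnt n (n + 1) (by omega), rsCount_eq_cnt (n / 2) n (by omega)]
  rw [Finset.card_filter, Finset.card_filter, Finset.sum_range_succ']
  have hz : ∀ m : ℕ, m.testBit 0 = decide (m % 2 = 1) := fun m => Nat.testBit_zero ..
  congr 1
  · apply Finset.sum_congr rfl
    intro k _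
    rw [Nat.testBit_succ, Nat.testBit_succ]
  · rw [show (0 : ℕ) + 1 = 0 + 1 from rfl]
    rw [Nat.testBit_succ, hz n, hz (n / 2)]
    by_cases h1 : n % 2 = 1 <;> by_cases h2 : (n / 2) % 2 = 1 <;> simp [h1, h2]

lemma cast_fin2 (n : ℕ) : ((n : Fin 2)).val = n % 2 := by
  rw [Fin.val_natCast]

lemma rsB_even (n : ℕ) : rsB (2 * n) = rsB n := by
  unfold rsB
  rw [rsCount_rec (2 * n)]
  have h1 : 2 * n % 2 = 0 := by omega
  have h2 : 2 * n / 2 = n := by omega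
  simp [h1, h2]

lemma rsB_odd (n : ℕ) : rsB (2 * n + 1) = rsB n + (n : Fin 2) := by
  unfold rsB
  rw [rsCount_rec (2 * n + 1)]
  have h1 : (2 * n + 1) % 2 = 1 := by omega
  have h2 : (2 * n + 1) / 2 = n := by omega
  rw [h1, h2, Nat.cast_add]
  congr 1
  rcases Nat.mod_two_eq_zero_or_one n with h | h <;>
    · simp only [h]
      apply Fin.ext
      simp [cast_fin2, h]

-- the automaton

abbrev St := Fin 2 × Fin 2 × Fin 2 × Fin 2 × Fin 2 × Fin 2 × Fin 2 × Fin 2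

def v (s : St) (j : ℕ) : Fin 2 :=
  match s with
  | (a0, a1, a2, a3, a4, a5, a6, p) =>
    [a0, a0 + p, a1, a1 + p + 1, a2, a2 + p, a3, a3 + p + 1,
     a4, a4 + p, a5, a5 + p + 1, a6, a6 + p].getD j 0

def encSt (s : St) : ℕ :=
  match s with
  | (a0, a1, a2, a3, a4, a5, a6, p) =>
    a0.val + 2 * a1.val + 4 * a2.val + 8 * a3.val + 16 * a4.val + 32 * a5.val +
      64 * a6.val + 128 * p.val

def RSInv (s : St) : Prop :=
  encSt s ∈ [4, 11, 17, 18, 29, 30, 33, 34, 45, 46, 55, 56, 71, 72, 81, 82, 93, 94,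
    97, 98, 109, 110, 116, 123, 136, 137, 142, 143, 144, 145, 150, 151, 163, 164,
    186, 189, 194, 197, 219, 220, 232, 233, 238, 239, 240, 241, 246, 247]

instance : DecidablePred RSInv := fun s => by unfold RSInv; infer_instance

def f0 (s : St) : St := (v s 0, v s 1, v s 2, v s 3, v s 4, v s 5, v s 6, 0)
def f1 (s : St) : St := (v s 1, v s 2, v s 3, v s 4, v s 5, v s 6, v s 7, 1)

def st (i : ℕ) : St :=
  (rsB i, rsB (i + 1), rsB (i + 2), rsB (i + 3), rsB (i + 4), rsB (i + 5), rsB (i + 6),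
    (i : Fin 2))

lemma cast_two_zero : ((2 : ℕ) : Fin 2) = 0 := rfl

lemma cast_add_nat (q m : ℕ) : ((q + m : ℕ) : Fin 2) = (q : Fin 2) + (m : Fin 2) := by
  push_cast; ring

lemma rsB_v (q j : ℕ) (hj : j ≤ 13) : rsB (2 * q + j) = v (st q) j := by
  interval_cases j
  · rw [show 2 * q + 0 = 2 * q from rfl, rsB_even]; rfl
  · rw [rsB_odd]; rfl
  · rw [show 2 * q + 2 = 2 * (q + 1) from by ring, rsB_even]; rfl
  · rw [show 2 * q + 3 = 2 * (q + 1) + 1 from by ring, rsB_odd, cast_add_nat,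
      show ((1 : ℕ) : Fin 2) = 1 from by decide, ← add_assoc]; rfl
  · rw [show 2 * q + 4 = 2 * (q + 2) from by ring, rsB_even]; rfl
  · rw [show 2 * q + 5 = 2 * (q + 2) + 1 from by ring, rsB_odd, cast_add_nat,
      show ((2 : ℕ) : Fin 2) = 0 from by decide, add_zero]; rfl
  · rw [show 2 * q + 6 = 2 * (q + 3) from by ring, rsB_even]; rfl
  · rw [show 2 * q + 7 = 2 * (q + 3) + 1 from by ring, rsB_odd, cast_add_nat,
      show ((3 : ℕ) : Fin 2) = 1 from by decide, ← add_assoc]; rfl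
  · rw [show 2 * q + 8 = 2 * (q + 4) from by ring, rsB_even]; rfl
  · rw [show 2 * q + 9 = 2 * (q + 4) + 1 from by ring, rsB_odd, cast_add_nat,
      show ((4 : ℕ) : Fin 2) = 0 from by decide, add_zero]; rfl
  · rw [show 2 * q + 10 = 2 * (q + 5) from by ring, rsB_even]; rfl
  · rw [show 2 * q + 11 = 2 * (q + 5) + 1 from by ring, rsB_odd, cast_add_nat,
      show ((5 : ℕ) : Fin 2) = 1 from by decide, ← add_assoc]; rfl
  · rw [show 2 * q + 12 = 2 * (q + 6) from by ring, rsB_even]; rfl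
  · rw [show 2 * q + 13 = 2 * (q + 6) + 1 from by ring, rsB_odd, cast_add_nat,
      show ((6 : ℕ) : Fin 2) = 0 from by decide, add_zero]; rfl

lemma st_even (q : ℕ) : st (2 * q) = f0 (st q) := by
  unfold st f0
  refine Prod.ext ?_ (Prod.ext ?_ (Prod.ext ?_ (Prod.ext ?_ (Prod.ext ?_ (Prod.ext ?_
    (Prod.ext ?_ ?_)))))) <;> simp only
  · exact rsB_v q 0 (by norm_num)
  · exact (show rsB (2 * q + 1) = _ from rsB_v q 1 (by norm_num))
  · exact (show rsB (2 * q + 2) = _ from rsB_v q 2 (by norm_num))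
  · exact (show rsB (2 * q + 3) = _ from rsB_v q 3 (by norm_num))
  · exact (show rsB (2 * q + 4) = _ from rsB_v q 4 (by norm_num))
  · exact (show rsB (2 * q + 5) = _ from rsB_v q 5 (by norm_num))
  · exact (show rsB (2 * q + 6) = _ from rsB_v q 6 (by norm_num))
  · rw [show ((2 * q : ℕ) : Fin 2) = 0 from Fin.ext (by rw [cast_fin2]; simp)]

lemma st_odd (q : ℕ) : st (2 * q + 1) = f1 (st q) := by
  unfold st f1
  refine Prod.ext ?_ (Prod.ext ?_ (Prod.ext ?_ (Prod.ext ?_ (Prod.ext ?_ (Prod.ext ?_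
    (Prod.ext ?_ ?_)))))) <;> simp only
  · exact rsB_v q 1 (by norm_num)
  · exact (show rsB (2 * q + 2) = _ from rsB_v q 2 (by norm_num))
  · exact (show rsB (2 * q + 3) = _ from rsB_v q 3 (by norm_num))
  · exact (show rsB (2 * q + 4) = _ from rsB_v q 4 (by norm_num))
  · exact (show rsB (2 * q + 5) = _ from rsB_v q 5 (by norm_num))
  · exact (show rsB (2 * q + 6) = _ from rsB_v q 6 (by norm_num))
  · exact (show rsB (2 * q + 7) = _ from rsB_v q 7 (by norm_num))
  · rw [cast_add_nat, show ((2 * q : ℕ) : Fin 2) = 0 from Fin.ext (by rw [cast_fin2]; simp), zero_add]; rfl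

lemma st_zero : st 0 = (0, 0, 0, 1, 0, 0, 1, 0) := by decide

lemma inv_closed : ∀ s : St, RSInv s → RSInv (f0 s) ∧ RSInv (f1 s) := by decide

lemma inv_st : ∀ i : ℕ, RSInv (st i) := by
  intro i
  induction i using Nat.strong_induction_on with
  | _ i ih =>
    rcases Nat.even_or_odd i with ⟨q, hq⟩ | ⟨q, hq⟩
    · rcases Nat.eq_zero_or_pos q with rfl | hq0
      · have : i = 0 := by omega
        rw [this, st_zero]; decide
      · have : i = 2 * q := by omega
        rw [this, st_even]
        exact (inv_closed _ (ih q (by omega))).1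
    · have : i = 2 * q + 1 := by omega
      rw [this, st_odd]
      exact (inv_closed _ (ih q (by omega))).2

lemma key : ∀ s : St, RSInv s →
    (¬ ∀ j < 9, v s j = v s (8 - j)) ∧ (¬ ∀ j < 9, v s (j + 1) = v s (9 - j)) ∧
    (¬ ∀ j < 11, v s j = v s (10 - j)) ∧ (¬ ∀ j < 11, v s (j + 1) = v s (11 - j)) ∧
    (¬ ∀ j < 13, v s j = v s (12 - j)) ∧ (¬ ∀ j < 13, v s (j + 1) = v s (13 - j)) := by
  decide

lemma no_pal (ℓ : ℕ) (hℓ9 : ℓ = 9 ∨ ℓ = 11 ∨ ℓ = 13) : ¬ HasPalFactor rsB ℓ := by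
  rintro ⟨i, h⟩
  rcases Nat.even_or_odd i with ⟨q, hq⟩ | ⟨q, hq⟩
  · have hi : i = 2 * q := by omega
    have hpal : ∀ j < ℓ, v (st q) j = v (st q) (ℓ - 1 - j) := by
      intro j hj
      have := h j hj
      rw [hi] at this
      rw [show 2 * q + ℓ - 1 - j = 2 * q + (ℓ - 1 - j) from by omega] at this
      rw [rsB_v q j (by omega), rsB_v q (ℓ - 1 - j) (by omega)] at this
      exact this
    have hk := key (st q) (inv_st q)
    rcases hℓ9 with rfl | rfl | rfl
    · exact hk.1 hpal
    · exact hk.2.2.1 hpal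
    · exact hk.2.2.2.2.1 hpal
  · have hi : i = 2 * q + 1 := by omega
    have hpal : ∀ j < ℓ, v (st q) (j + 1) = v (st q) (ℓ - j) := by
      intro j hj
      have := h j hj
      rw [hi] at this
      rw [show 2 * q + 1 + j = 2 * q + (j + 1) from by omega,
          show 2 * q + 1 + ℓ - 1 - j = 2 * q + (ℓ - j) from by omega] at this
      rw [rsB_v q (j + 1) (by omega), rsB_v q (ℓ - j) (by omega)] at this
      exact this
    have hk := key (st q) (inv_st q)
    rcases hℓ9 with rfl | rfl | rfl
    · exact hk.2.1 hpal
    · exact hk.2.2.2.1 hpal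
    · exact hk.2.2.2.2.2 hpal

/-- The binary Rudin–Shapiro sequence contains no palindromic factor of length 9,
none of length 11, and none of length 13. -/
theorem rsB_no_odd_palindromes :
    ¬ HasPalFactor rsB 9 ∧ ¬ HasPalFactor rsB 11 ∧ ¬ HasPalFactor rsB 13 :=
  ⟨no_pal 9 (by norm_num), no_pal 11 (by norm_num), no_pal 13 (by norm_num)⟩
end

section
/- For every n : ℕ, φ(u n) = x n, where u is the quaternary Rudin–Shapiro sequence, x is the binary Rudin–Shapiro sequence, and φ : Fin 4 → Fin 2 maps the letters a and b to 0 and the letters c and d to 1. That is, the binary Rudin–Shapiro sequence is the letter-to-letter image under φ of the fixed point of the 4-letter substitution. -/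
/-- First letters of the substitution `σ : a ↦ ab, b ↦ ac, c ↦ db, d ↦ dc`
(letters `a = 0, b = 1, c = 2, d = 3`). -/
def rsQFst : Fin 4 → Fin 4 := ![0, 0, 3, 3]

/-- Second letters of the substitution `σ : a ↦ ab, b ↦ ac, c ↦ db, d ↦ dc`. -/
def rsQSnd : Fin 4 → Fin 4 := ![1, 2, 1, 2]

/-- The quaternary Rudin–Shapiro sequence: the fixed point of `σ` starting with `a`,
given by `u 0 = a`, `u (2n) = ` first letter of `σ (u n)`, `u (2n+1) = ` second
letter of `σ (u n)`. -/
def rsQ : ℕ → Fin 4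
  | 0 => 0
  | (n + 1) =>
      if (n + 1) % 2 = 0 then rsQFst (rsQ ((n + 1) / 2))
      else rsQSnd (rsQ ((n + 1) / 2))
  decreasing_by all_goals exact Nat.div_lt_self (Nat.succ_pos n) one_lt_two

/-- The letter-to-letter map sending `a, b ↦ 0` and `c, d ↦ 1`. -/
def rsPhi : Fin 4 → Fin 2 := ![0, 0, 1, 1]

lemma rs_testBit_lt {n k : ℕ} (h : n.testBit k = true) : k < n := by
  by_contra hc
  have : n < 2 ^ k := lt_of_le_of_lt (by omega) (Nat.lt_two_pow_self (n := k))
  simp [Nat.testBit_lt_two_pow this] at h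

lemma rsCount_eq_sum (n N : ℕ) (h : n ≤ N) :
    rsCount n = ∑ k ∈ Finset.range N, if n.testBit k ∧ n.testBit (k + 1) then 1 else 0 := by
  rw [rsCount, Finset.card_filter]
  apply Finset.sum_subset (Finset.range_subset_range.2 h)
  intro k _ hk
  simp only [Finset.mem_range, not_lt] at hk
  rw [if_neg]
  rintro ⟨h1, _⟩
  exact absurd (rs_testBit_lt h1) (by omega)

lemma rsCount_two_mul (n : ℕ) : rsCount (2 * n) = rsCount n := by
  rw [rsCount_eq_sum (2 * n) (2 * n + 2) (by omega), Finset.sum_range_succ',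
    rsCount_eq_sum n (2 * n + 1) (by omega)]
  simp [Nat.testBit_succ, Nat.testBit_zero, Nat.mul_div_cancel_left _ (two_pos)]

lemma rsCount_two_mul_add_one (n : ℕ) : rsCount (2 * n + 1) = rsCount n + n % 2 := by
  rw [rsCount_eq_sum (2 * n + 1) (2 * n + 2) (by omega), Finset.sum_range_succ',
    rsCount_eq_sum n (2 * n + 1) (by omega)]
  have hd : (2 * n + 1) / 2 = n := by omega
  simp only [Nat.testBit_succ, Nat.testBit_zero, hd]
  rcases Nat.mod_two_eq_zero_or_one n with h | h <;> simp [h] <;> omega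

def rsKey (n : ℕ) : Fin 4 :=
  if rsB n = 0 then (if n % 2 = 0 then 0 else 1) else (if n % 2 = 0 then 3 else 2)

lemma rsB_two (x : Fin 2) : x = 0 ∨ x = 1 := by omega

lemma rsKey_even (k : ℕ) : rsKey (2 * k) = rsQFst (rsKey k) := by
  have hB : rsB (2 * k) = rsB k := by simp [rsB, rsCount_two_mul]
  rcases rsB_two (rsB k) with h | h <;>
    rcases Nat.mod_two_eq_zero_or_one k with h2 | h2 <;>
      simp [rsKey, hB, h, h2, Nat.mul_mod_right, rsQFst]

open Fin.NatCast in
lemma rsKey_odd (k : ℕ) : rsKey (2 * k + 1) = rsQSnd (rsKey k) := by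
  have hB : rsB (2 * k + 1) = rsB k + ((k % 2 : ℕ) : Fin 2) := by
    simp [rsB, rsCount_two_mul_add_one]
  have hm : (2 * k + 1) % 2 = 1 := by omega
  rcases rsB_two (rsB k) with h | h <;>
    rcases Nat.mod_two_eq_zero_or_one k with h2 | h2 <;>
      simp [rsKey, hB, h, h2, hm, rsQSnd]

lemma rsQ_eq_key : ∀ n, rsQ n = rsKey n := by
  intro n
  induction n using Nat.strong_induction_on with
  | _ n ih =>
    match n with
    | 0 =>
      have : rsB 0 = 0 := rfl
      simp [rsQ, rsKey, this]
    | (m + 1) =>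
      have hk : (m + 1) / 2 < m + 1 := Nat.div_lt_self (Nat.succ_pos m) one_lt_two
      rw [rsQ, ih _ hk]
      rcases Nat.mod_two_eq_zero_or_one (m + 1) with h | h
      · have h2 : m + 1 = 2 * ((m + 1) / 2) := by omega
        rw [if_pos h, ← rsKey_even, ← h2]
      · have h2 : m + 1 = 2 * ((m + 1) / 2) + 1 := by omega
        rw [if_neg (by omega), ← rsKey_odd, ← h2]

/-- The binary Rudin–Shapiro sequence is the image under `φ` of the quaternary
Rudin–Shapiro sequence: `φ (u n) = x n` for all `n`. -/
theorem rsPhi_rsQ_eq_rsB : ∀ n : ℕ, rsPhi (rsQ n) = rsB n := by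
  intro n
  rw [rsQ_eq_key]
  rcases rsB_two (rsB n) with h | h <;>
    rcases Nat.mod_two_eq_zero_or_one n with h2 | h2 <;>
      simp [rsKey, h, h2, rsPhi]
end
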